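/- arXiv:1009.3201 — 5 statements merged into one kernel-verified Lean document; each statement's English description precedes it below -/
import Mathlib

section
/- For coprime positive integers a and b with a odd, one has s(a,2b) = s(a,b) + s(a,b;0,1/2), where s(q,p;x,y) = Σ_{μ mod p} (((μ+y)/p))((q(μ+y)/p + x)) is the Dedekind–Rademacher sum. -/
/-! Split the indices μ < 2b by parity: μ = 2ν gives the terms of s(a,b), and μ = 2ν + 1 gives
those of s(a,b;0,1/2), because (2ν + 1)/(2b) = (ν + 1/2)/b. Both sums are of the form
Σ ((t))((a t)) over t = (μ + y)/p. -/

open Finset Real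

open Classical in
/-- The sawtooth function: 0 on integers, fractional part minus 1/2 otherwise. -/
noncomputable def saw (x : ℝ) : ℝ :=
  if ∃ n : ℤ, x = n then 0 else Int.fract x - 1/2

/-- The Dedekind sum s(q,p). -/
noncomputable def dedekindSum (q : ℤ) (p : ℕ) : ℝ :=
  ∑ μ ∈ Finset.range p, saw ((μ : ℝ) / p) * saw ((q : ℝ) * μ / p)

/-- The Dedekind–Rademacher sum s(q,p;x,y). -/
noncomputable def drSum (q : ℤ) (p : ℕ) (x y : ℝ) : ℝ :=
  ∑ μ ∈ Finset.range p, saw (((μ : ℝ) + y) / p) * saw ((q : ℝ) * ((μ : ℝ) + y) / p + x)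

theorem sum_range_two_mul_eq_even_add_odd {M : Type*} [AddCommMonoid M] (f : ℕ → M) (n : ℕ) :
    ∑ i ∈ range (2 * n), f i = ∑ i ∈ range n, f (2 * i) + ∑ i ∈ range n, f (2 * i + 1) := by
  induction n with
  | zero => simp
  | succ n ih =>
    rw [Nat.mul_succ, sum_range_succ, sum_range_succ, sum_range_succ, sum_range_succ, ih]
    abel

theorem sum_range_two_mul_div (g : ℝ → ℝ) (p : ℕ) :
    ∑ μ ∈ range (2 * p), g (μ / (2 * p : ℕ)) =
      ∑ ν ∈ range p, g (ν / p) + ∑ ν ∈ range p, g ((ν + 1 / 2) / p) := by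
  rw [sum_range_two_mul_eq_even_add_odd]
  congr 1 <;> refine sum_congr rfl fun ν _ => congrArg g ?_ <;> push_cast
  · rw [mul_div_mul_left _ _ two_ne_zero]
  · rw [← mul_div_mul_left _ (p : ℝ) two_ne_zero]
    ring

theorem dedekindSum_eq_sum_saw_mul_saw (q : ℤ) (p : ℕ) :
    dedekindSum q p = ∑ μ ∈ range p, saw (μ / p) * saw (q * (μ / p)) := by
  simp only [dedekindSum, mul_div_assoc]

theorem drSum_zero_eq_sum_saw_mul_saw (q : ℤ) (p : ℕ) (y : ℝ) :
    drSum q p 0 y = ∑ μ ∈ range p, saw ((μ + y) / p) * saw (q * ((μ + y) / p)) := by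
  simp only [drSum, mul_div_assoc, add_zero]

theorem dedekind_sum_split_general (a b : ℕ) :
    dedekindSum (a : ℤ) (2 * b) = dedekindSum (a : ℤ) b + drSum (a : ℤ) b 0 (1/2) := by
  rw [dedekindSum_eq_sum_saw_mul_saw, dedekindSum_eq_sum_saw_mul_saw,
    drSum_zero_eq_sum_saw_mul_saw]
  exact sum_range_two_mul_div (fun t => saw t * saw (a * t)) b

theorem dedekind_sum_split (a b : ℕ) (ha : 0 < a) (hb : 0 < b)
    (hcop : Nat.Coprime a b) (hodd : Odd a) :
    dedekindSum (a : ℤ) (2 * b) = dedekindSum (a : ℤ) b + drSum (a : ℤ) b 0 (1/2) :=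
  dedekind_sum_split_general a b
end

section
/- For any coprime positive integers a and c, one has s(c,a;1/2,1/2) + s(a - c, 2a) + s(c,a) = 0. -/
open Finset Real

/-!
Splitting the residues mod `2a` into even and odd ones gives
`s(a - c, 2a) = s(a - c, a) + s(a - c, a; 0, 1/2)`.
Since `(a - c) t / a = t - c t / a` and `saw` is odd and `1`-periodic, replacing `q` by `p - q`
negates a Dedekind–Rademacher sum, so the two pieces are `-s(c, a)` and `-s(c, a; 1/2, 1/2)`.
-/

lemma saw_eq_ite_fract (x : ℝ) : saw x = if Int.fract x = 0 then 0 else Int.fract x - 1/2 := by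
  have hint : Int.fract x = 0 ↔ ∃ n : ℤ, x = n := by
    simp only [Int.fract_eq_zero_iff, Set.mem_range, eq_comm]
  classical
  exact if_congr hint.symm rfl rfl

lemma saw_add_intCast (x : ℝ) (n : ℤ) : saw (x + n) = saw x := by
  simp only [saw_eq_ite_fract, Int.fract_add_intCast]

lemma saw_neg (x : ℝ) : saw (-x) = -saw x := by
  simp only [saw_eq_ite_fract, Int.fract_neg_eq_zero]
  split_ifs with hx
  · simp
  · rw [Int.fract_neg hx]; ring

lemma saw_intCast_sub (n : ℤ) (x : ℝ) : saw (n - x) = -saw x := by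
  rw [sub_eq_neg_add, saw_add_intCast, saw_neg]

lemma sum_range_two_mul {M : Type*} [AddCommMonoid M] (f : ℕ → M) (n : ℕ) :
    ∑ i ∈ range (2 * n), f i = ∑ i ∈ range n, (f (2 * i) + f (2 * i + 1)) := by
  induction n with
  | zero => simp
  | succ n ih =>
    rw [show 2 * (n + 1) = 2 * n + 1 + 1 by ring, sum_range_succ, sum_range_succ, sum_range_succ,
      ih, add_assoc]

lemma drSum_zero_zero (q : ℤ) (p : ℕ) : drSum q p 0 0 = dedekindSum q p := by
  simp only [drSum, dedekindSum, add_zero, mul_div_assoc]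

lemma drSum_add_intCast (q : ℤ) (p : ℕ) (x y : ℝ) (n : ℤ) :
    drSum q p (x + n) y = drSum q p x y := by
  simp only [drSum, ← add_assoc, saw_add_intCast]

lemma dedekindSum_two_mul (q : ℤ) (p : ℕ) :
    dedekindSum q (2 * p) = dedekindSum q p + drSum q p 0 (1/2) := by
  simp only [dedekindSum, drSum, add_zero, sum_range_two_mul, ← sum_add_distrib]
  refine sum_congr rfl fun ν hν => ?_
  have hp : (p : ℝ) ≠ 0 := Nat.cast_ne_zero.mpr (by have := mem_range.mp hν; omega)
  congr 3 <;> (push_cast; field_simp)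

lemma drSum_sub_self (q : ℤ) (p : ℕ) (x y : ℝ) :
    drSum ((p : ℤ) - q) p x y = -drSum q p (-(x + y)) y := by
  rw [drSum, drSum, ← sum_neg_distrib]
  refine sum_congr rfl fun ν hν => ?_
  have hp : (p : ℝ) ≠ 0 := Nat.cast_ne_zero.mpr (by have := mem_range.mp hν; omega)
  have hshift : ((p : ℤ) - q : ℤ) * ((ν : ℝ) + y) / p + x
      = ((ν : ℤ) : ℝ) - (q * ((ν : ℝ) + y) / p + -(x + y)) := by
    push_cast; field_simp; ring
  rw [hshift, saw_intCast_sub, mul_neg]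

lemma dedekindSum_sub_self (q : ℤ) (p : ℕ) : dedekindSum ((p : ℤ) - q) p = -dedekindSum q p := by
  rw [← drSum_zero_zero, drSum_sub_self, add_zero, neg_zero, drSum_zero_zero]

theorem dr_sum_identity_general (a c : ℕ) :
    drSum (c : ℤ) a (1/2) (1/2) + dedekindSum ((a : ℤ) - c) (2 * a)
      + dedekindSum (c : ℤ) a = 0 := by
  have hodd : drSum ((a : ℤ) - c) a 0 (1/2) = -drSum c a (1/2) (1/2) := by
    rw [drSum_sub_self, show -((0 : ℝ) + 1/2) = 1/2 + ((-1 : ℤ) : ℝ) by norm_num,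
      drSum_add_intCast]
  rw [dedekindSum_two_mul, dedekindSum_sub_self, hodd]
  ring

theorem dr_sum_identity (a c : ℕ) (ha : 0 < a) (hc : 0 < c) (hcop : Nat.Coprime a c) :
    drSum (c : ℤ) a (1/2) (1/2) + dedekindSum ((a : ℤ) - c) (2 * a)
      + dedekindSum (c : ℤ) a = 0 :=
  dr_sum_identity_general a c
end

section
/- Let a_1,...,a_n be pairwise coprime positive integers with a_1 even, and let b_1,...,b_n be integers satisfying Σ_i b_i·(a_1···a_n)/a_i = 1 and such that every a_i - b_i is odd. Then (a_1 - b_1)(a_1 - a_2···a_n) ≡ 1 (mod 2a_1). -/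
open Finset Real

theorem even_case_congruence_first (n : ℕ) (a : Fin (n+1) → ℕ) (b : Fin (n+1) → ℤ)
    (hpos : ∀ i, 0 < a i) (heven : Even (a 0))
    (hcop : ∀ i j, i ≠ j → Nat.Coprime (a i) (a j))
    (hsum : ∑ i, b i * ∏ j ∈ Finset.univ.erase i, (a j : ℤ) = 1)
    (hodddiff : ∀ i, Odd ((a i : ℤ) - b i)) :
    ((a 0 : ℤ) - b 0) * ((a 0 : ℤ) - ∏ j ∈ Finset.univ.erase 0, (a j : ℤ))
      ≡ 1 [ZMOD (2 * (a 0 : ℤ))] := by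
  set P : ℤ := ∏ j ∈ Finset.univ.erase 0, (a j : ℤ) with hP
  -- every a i with i ≠ 0 is odd
  have hodd : ∀ i : Fin (n+1), i ≠ 0 → Odd ((a i : ℤ)) := by
    intro i hi
    have hc := hcop 0 i (Ne.symm hi)
    have h2 : (2 : ℕ) ∣ a 0 := heven.two_dvd
    have h3 : Odd (a i) := by
      rcases Nat.even_or_odd (a i) with h | h
      · exfalso
        have h4 : (2:ℕ) ∣ Nat.gcd (a 0) (a i) := Nat.dvd_gcd h2 h.two_dvd
        rw [hc] at h4
        omega
      · exact h
    exact_mod_cast h3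
  -- P is odd
  have hPodd : Odd P := by
    rw [hP]
    apply Finset.prod_induction _ Odd (fun x y => Odd.mul) odd_one
    intro i hi
    exact hodd i (Finset.ne_of_mem_erase hi)
  -- b 0 is odd
  have hb0 : Odd (b 0) := by
    have h1 := hodddiff 0
    have h2 : Even ((a 0 : ℤ)) := by exact_mod_cast heven.natCast (α := ℤ)
    rcases h1 with ⟨k, hk⟩; rcases h2 with ⟨m, hm⟩
    exact ⟨m - k - 1, by omega⟩
  -- b i is even for i ≠ 0
  have hbe : ∀ i : Fin (n+1), i ≠ 0 → Even (b i) := by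
    intro i hi
    rcases hodd i hi with ⟨k, hk⟩
    rcases hodddiff i with ⟨m, hm⟩
    exact ⟨k - m, by omega⟩
  -- 2 * a 0 divides each term of the sum over erase 0
  have hdvd : ∀ i ∈ Finset.univ.erase (0 : Fin (n+1)),
      (2 * (a 0 : ℤ)) ∣ b i * ∏ j ∈ Finset.univ.erase i, (a j : ℤ) := by
    intro i hi
    have hi0 : i ≠ 0 := Finset.ne_of_mem_erase hi
    have h1 : (2 : ℤ) ∣ b i := (hbe i hi0).two_dvd
    have h2 : (a 0 : ℤ) ∣ ∏ j ∈ Finset.univ.erase i, (a j : ℤ) :=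
      Finset.dvd_prod_of_mem _ (Finset.mem_erase.mpr ⟨Ne.symm hi0, Finset.mem_univ _⟩)
    exact mul_dvd_mul h1 h2
  have hsum' : ∑ i ∈ Finset.univ.erase (0 : Fin (n+1)),
      b i * ∏ j ∈ Finset.univ.erase i, (a j : ℤ) = 1 - b 0 * P := by
    rw [← Finset.add_sum_erase Finset.univ
      (fun i => b i * ∏ j ∈ Finset.univ.erase i, (a j : ℤ)) (Finset.mem_univ (0 : Fin (n+1)))] at hsum
    linarith [hsum]
  have hdvd1 : (2 * (a 0 : ℤ)) ∣ (1 - b 0 * P) := hsum' ▸ Finset.dvd_sum hdvd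
  -- a 0 - P - b 0 is even
  have heven2 : (2 : ℤ) ∣ ((a 0 : ℤ) - P - b 0) := by
    have h2 : Even ((a 0 : ℤ)) := by exact_mod_cast heven.natCast (α := ℤ)
    rcases h2 with ⟨m, hm⟩; rcases hPodd with ⟨k, hk⟩; rcases hb0 with ⟨l, hl⟩
    exact ⟨m - k - l - 1, by omega⟩
  rcases heven2 with ⟨c, hc⟩
  have key : (2 * (a 0 : ℤ)) ∣ (((a 0 : ℤ) - b 0) * ((a 0 : ℤ) - P) - 1) := by
    have : ((a 0 : ℤ) - b 0) * ((a 0 : ℤ) - P) - 1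
        = 2 * (a 0 : ℤ) * c - (1 - b 0 * P) := by ring_nf; nlinarith [hc]
    rw [this]
    exact dvd_sub (Dvd.intro c rfl) hdvd1
  exact (Int.modEq_iff_dvd.mpr (by simpa using key)).symm
end

section
/- (Reciprocity for Dedekind sums.) For coprime positive integers a and b, s(a,b) + s(b,a) = -1/4 + (a² + b² + 1)/(12ab). -/
/-!
For `0 < μ < b` neither `μ / b` nor `a μ / b` is an integer, so `s(a, b)` is an explicit
expression in `b` and `D(a, b) = floorMomentSum a b`, and reciprocity becomes an identity
between `D(a, b)` and `D(b, a)`. Two facts give it. Since `μ ↦ a μ mod b` permutes the residues,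
`∑ (a μ - b ⌊a μ / b⌋)² = ∑ μ²`, which ties `∑ ⌊a μ / b⌋²` to `D(a, b)`. Counting the lattice points
of `[0, b) × [0, a)` with weight `ν` on both sides of the diagonal `b ν = a μ`, which contains
no lattice point with `0 < μ < b`, ties `∑ ⌊a μ / b⌋²` to `D(b, a)`.
-/

open Finset Real

theorem sum_range_natCast_mul_two {R : Type*} [CommRing R] (n : ℕ) :
    (∑ i ∈ range n, (i : R)) * 2 = n * (n - 1) := by
  induction n with
  | zero => simp
  | succ n ih => rw [sum_range_succ, add_mul, ih]; push_cast; ring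

theorem sum_range_natCast_sq_mul_six {R : Type*} [CommRing R] (n : ℕ) :
    (∑ i ∈ range n, (i : R) ^ 2) * 6 = n * (n - 1) * (2 * n - 1) := by
  induction n with
  | zero => simp
  | succ n ih => rw [sum_range_succ, add_mul, ih]; push_cast; ring

theorem Nat.cast_mod_eq_sub_mul_div {R : Type*} [CommRing R] (m n : ℕ) :
    ((m % n : ℕ) : R) = m - n * (m / n : ℕ) := by
  rw [eq_sub_iff_add_eq, ← Nat.cast_mul, ← Nat.cast_add, Nat.mod_add_div]

theorem Nat.Coprime.sum_range_mul_mod {M : Type*} [AddCommMonoid M] {a b : ℕ}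
    (h : a.Coprime b) (f : ℕ → M) :
    ∑ μ ∈ range b, f (a * μ % b) = ∑ μ ∈ range b, f μ := by
  have hinj : Set.InjOn (fun μ => a * μ % b) (range b) := by
    intro μ hμ ν hν hμν
    have := Nat.ModEq.cancel_left_of_coprime h.symm hμν
    rwa [Nat.ModEq, Nat.mod_eq_of_lt (mem_range.1 hμ), Nat.mod_eq_of_lt (mem_range.1 hν)] at this
  have himage : (range b).image (fun μ => a * μ % b) = range b := by
    refine eq_of_subset_of_card_le ?_ (Finset.card_image_of_injOn hinj).ge
    intro r hr
    obtain ⟨μ, hμ, rfl⟩ := mem_image.1 hr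
    exact mem_range.2 (Nat.mod_lt _ (pos_of_ne_zero (by rintro rfl; simp at hμ)))
  rw [← sum_image hinj, himage]

theorem filter_range_mul_le_eq_range {a c n : ℕ} (ha : 0 < a) (h : c / a < n) :
    (range n).filter (fun μ => a * μ ≤ c) = range (c / a + 1) := by
  ext μ
  simp only [mem_filter, mem_range, Nat.lt_succ_iff, Nat.le_div_iff_mul_le ha, mul_comm μ]
  constructor
  · exact And.right
  · intro hμ
    exact ⟨lt_of_le_of_lt ((Nat.le_div_iff_mul_le ha).2 (by rwa [mul_comm])) h, hμ⟩

-- Both sides are twice the `ν`-weighted number of lattice points in `[0, b) × [0, a)`; on the left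
-- they are split by the diagonal `b ν = a μ`, counted by columns below it and by rows above it.
theorem Nat.Coprime.sum_range_div_mul_succ_add {a b : ℕ} (ha : 0 < a) (hb : 0 < b)
    (h : a.Coprime b) :
    ∑ μ ∈ range b, (a * μ / b) * (a * μ / b + 1) + ∑ ν ∈ range a, 2 * ν * (b * ν / a + 1)
      = 2 * b * ∑ ν ∈ range a, ν := by
  have hcol : ∀ μ ∈ range b, (∑ ν ∈ range a with b * ν < a * μ, ν) * 2
      = (a * μ / b) * (a * μ / b + 1) := by
    intro μ hμ
    rcases Nat.eq_zero_or_pos μ with rfl | hμ0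
    · simp
    have hne : ∀ ν, b * ν ≠ a * μ := fun ν hν => by
      have := Nat.le_of_dvd hμ0 (h.symm.dvd_of_dvd_mul_left ⟨ν, hν.symm⟩)
      exact absurd (mem_range.1 hμ) this.not_gt
    have hlt : a * μ / b < a :=
      (Nat.div_lt_iff_lt_mul hb).2 (Nat.mul_lt_mul_of_pos_left (mem_range.1 hμ) ha)
    rw [filter_congr (fun ν _ => (hne ν).le_iff_lt.symm), filter_range_mul_le_eq_range hb hlt,
      sum_range_id_mul_two, Nat.add_sub_cancel, mul_comm]
  have hrow : ∀ ν ∈ range a, #{μ ∈ range b | b * ν < a * μ} + (b * ν / a + 1) = b := by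
    intro ν hν
    have hlt : b * ν / a < b :=
      (Nat.div_lt_iff_lt_mul ha).2 (Nat.mul_lt_mul_of_pos_left (mem_range.1 hν) hb)
    have hsplit := card_filter_add_card_filter_not (s := range b) (p := fun μ => b * ν < a * μ)
    simpa only [not_lt, filter_range_mul_le_eq_range ha hlt, card_range] using hsplit
  calc ∑ μ ∈ range b, (a * μ / b) * (a * μ / b + 1) + ∑ ν ∈ range a, 2 * ν * (b * ν / a + 1)
      = (∑ μ ∈ range b, ∑ ν ∈ range a with b * ν < a * μ, ν) * 2
          + ∑ ν ∈ range a, 2 * ν * (b * ν / a + 1) := by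
        rw [sum_mul, sum_congr rfl hcol]
    _ = (∑ ν ∈ range a, ∑ μ ∈ range b with b * ν < a * μ, ν) * 2
          + ∑ ν ∈ range a, 2 * ν * (b * ν / a + 1) := by
        rw [sum_comm' (t' := range a) (s' := fun ν => {μ ∈ range b | b * ν < a * μ})
          (fun μ ν => by simp only [mem_filter]; tauto)]
    _ = 2 * b * ∑ ν ∈ range a, ν := by
        rw [sum_mul, ← sum_add_distrib, mul_sum]
        refine sum_congr rfl fun ν hν => ?_
        rw [sum_const, smul_eq_mul]
        linear_combination 2 * ν * hrow ν hν

theorem saw_natCast_div {m n : ℕ} (hn : n ≠ 0) (h : ¬ n ∣ m) :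
    saw (m / n) = (m % n : ℕ) / n - 1 / 2 := by
  have hfract : Int.fract ((m : ℝ) / n) ≠ 0 := by
    rw [Int.fract_div_natCast_eq_div_natCast_mod]
    exact div_ne_zero (by exact_mod_cast (mt Nat.dvd_of_mod_eq_zero h)) (by exact_mod_cast hn)
  rw [saw, if_neg, Int.fract_div_natCast_eq_div_natCast_mod]
  rintro ⟨k, hk⟩
  exact hfract (by rw [hk, Int.fract_intCast])

def floorMomentSum (a b : ℕ) : ℕ := ∑ μ ∈ range b, μ * (a * μ / b)

theorem Nat.Coprime.floorMomentSum_reciprocity {a b : ℕ} (ha : 0 < a) (hb : 0 < b)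
    (h : a.Coprime b) :
    12 * ((a : ℤ) * floorMomentSum a b + b * floorMomentSum b a)
      = (a - 1) * (b - 1) * (8 * a * b - a - b - 1) := by
  have hrem (μ : ℕ) : ((a * μ % b : ℕ) : ℤ) = a * μ - b * (a * μ / b : ℕ) := by
    rw [Nat.cast_mod_eq_sub_mul_div, Nat.cast_mul]
  have hsum : (a : ℤ) * ∑ μ ∈ range b, (μ : ℤ) - b * ∑ μ ∈ range b, ((a * μ / b : ℕ) : ℤ)
      = ∑ μ ∈ range b, (μ : ℤ) := by
    conv_rhs => rw [← h.sum_range_mul_mod (fun r => (r : ℤ))]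
    simp only [mul_sum, ← sum_sub_distrib, hrem]
  have hsq : (a : ℤ) ^ 2 * ∑ μ ∈ range b, (μ : ℤ) ^ 2
      - 2 * a * b * ∑ μ ∈ range b, (μ : ℤ) * (a * μ / b : ℕ)
      + b ^ 2 * ∑ μ ∈ range b, ((a * μ / b : ℕ) : ℤ) ^ 2 = ∑ μ ∈ range b, (μ : ℤ) ^ 2 := by
    conv_rhs => rw [← h.sum_range_mul_mod (fun r => (r : ℤ) ^ 2)]
    simp only [mul_sum, ← sum_sub_distrib, ← sum_add_distrib, hrem]
    exact sum_congr rfl fun μ _ => by ring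
  have hlat : ∑ μ ∈ range b, ((a * μ / b : ℕ) : ℤ) ^ 2 + ∑ μ ∈ range b, ((a * μ / b : ℕ) : ℤ)
      + 2 * ∑ ν ∈ range a, (ν : ℤ) * (b * ν / a : ℕ) + 2 * ∑ ν ∈ range a, (ν : ℤ)
      = 2 * b * ∑ ν ∈ range a, (ν : ℤ) := by
    have := congrArg (Nat.cast : ℕ → ℤ) (h.sum_range_div_mul_succ_add ha hb)
    simp only [Nat.cast_add, Nat.cast_mul, Nat.cast_sum, Nat.cast_one, Nat.cast_ofNat] at this
    rw [← this]
    simp only [mul_add, mul_one, sum_add_distrib, mul_sum, sq, mul_assoc]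
    ring
  have hS1b := sum_range_natCast_mul_two (R := ℤ) b
  have hS1a := sum_range_natCast_mul_two (R := ℤ) a
  have hS2 := sum_range_natCast_sq_mul_six (R := ℤ) b
  simp only [floorMomentSum, Nat.cast_sum, Nat.cast_mul]
  refine mul_left_cancel₀ (Int.natCast_ne_zero.2 hb.ne') ?_
  linear_combination 6 * b ^ 2 * hlat - 6 * hsq + 6 * b * hsum + (6 * b ^ 3 - 6 * b ^ 2) * hS1a
    + (a ^ 2 - 1) * hS2 + (3 * b - 3 * a * b) * hS1b

theorem Nat.Coprime.dedekindSum_eq_sum_mod {a b : ℕ} (hb : 0 < b) (h : a.Coprime b) :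
    dedekindSum a b
      = ∑ μ ∈ range b, ((μ : ℝ) / b - 1 / 2) * ((a * μ % b : ℕ) / b - 1 / 2) - 1 / 4 := by
  have hterm : ∀ μ ∈ (range b).erase 0, saw (μ / b) * saw ((a : ℤ) * μ / b)
      = ((μ : ℝ) / b - 1 / 2) * ((a * μ % b : ℕ) / b - 1 / 2) := by
    intro μ hμ
    obtain ⟨hμ0, hμb⟩ := mem_erase.1 hμ
    have hndvd : ¬ b ∣ μ := fun hd => hμ0 (Nat.eq_zero_of_dvd_of_lt hd (mem_range.1 hμb))
    rw [show ((a : ℤ) : ℝ) * μ = (a * μ : ℕ) by push_cast; rfl, saw_natCast_div hb.ne' hndvd,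
      saw_natCast_div hb.ne' (fun hd => hndvd (h.symm.dvd_of_dvd_mul_left hd)),
      Nat.mod_eq_of_lt (mem_range.1 hμb)]
  rw [dedekindSum, ← add_sum_erase _ _ (mem_range.2 hb), ← add_sum_erase _ _ (mem_range.2 hb),
    sum_congr rfl hterm]
  have hsaw0 : saw 0 = 0 := if_pos ⟨0, by simp⟩
  norm_num [hsaw0]

theorem Nat.Coprime.dedekindSum_eq_floorMomentSum {a b : ℕ} (hb : 0 < b) (h : a.Coprime b) :
    dedekindSum a b
      = a * (b - 1) * (2 * b - 1) / (6 * b) - floorMomentSum a b / b - (b - 1) / 4 := by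
  have hb' : (b : ℝ) ≠ 0 := by exact_mod_cast hb.ne'
  have hpt : ∀ μ ∈ range b, ((μ : ℝ) / b - 1 / 2) * ((a * μ % b : ℕ) / b - 1 / 2)
      = (a * μ ^ 2 - b * (μ * (a * μ / b : ℕ))) / b ^ 2 - (μ + (a * μ % b : ℕ)) / (2 * b) + 1 / 4 := by
    intro μ _
    rw [Nat.cast_mod_eq_sub_mul_div, Nat.cast_mul]
    field_simp
    ring
  have hsum := h.sum_range_mul_mod (fun r => (r : ℝ))
  have hS1 := sum_range_natCast_mul_two (R := ℝ) b
  have hS2 := sum_range_natCast_sq_mul_six (R := ℝ) b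
  rw [h.dedekindSum_eq_sum_mod hb, sum_congr rfl hpt, sum_add_distrib, sum_sub_distrib, ← sum_div,
    ← sum_div, sum_sub_distrib, ← mul_sum, ← mul_sum, sum_add_distrib, hsum, sum_const, card_range,
    nsmul_eq_mul]
  simp only [floorMomentSum, Nat.cast_sum, Nat.cast_mul]
  field_simp
  linear_combination 8 * a * hS2 - 24 * b * hS1

theorem dedekind_reciprocity (a b : ℕ) (ha : 0 < a) (hb : 0 < b)
    (hcop : Nat.Coprime a b) :
    dedekindSum (a : ℤ) b + dedekindSum (b : ℤ) a
      = -1/4 + ((a : ℝ)^2 + (b : ℝ)^2 + 1) / (12 * a * b) := by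
  rw [hcop.dedekindSum_eq_floorMomentSum hb, hcop.symm.dedekindSum_eq_floorMomentSum ha]
  have hrec := congrArg (Int.cast : ℤ → ℝ) (hcop.floorMomentSum_reciprocity ha hb)
  push_cast at hrec
  have ha' : (a : ℝ) ≠ 0 := by exact_mod_cast ha.ne'
  have hb' : (b : ℝ) ≠ 0 := by exact_mod_cast hb.ne'
  field_simp
  linear_combination -24 * hrec
end

section
/- For coprime positive integers p, q with q odd, the quantity c(q,p) = (1/p)·Σ_{k odd, 1 ≤ k ≤ 2p-1} cot(πk/(2p))·cot(πqk/(2p)) is an integer. -/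
open Finset Real

/-!
Writing `ξ = exp (2iθ)`, one has `cot θ = i (ξ + 1) / (ξ - 1)`, and when `ξ ^ p = -1` the
telescoping identity `(ξ - 1)(ξ + ⋯ + ξ ^ (p - 1)) = ξ ^ p - ξ = -(ξ + 1)` turns this into the
polynomial `-i (ξ + ⋯ + ξ ^ (p - 1))`. The angles of the sum give `ξ = ζ ^ (2k + 1)` with
`ζ = exp (πi / p)`, and as `q` is odd also `(ξ ^ q) ^ p = -1`. So each product of cotangents is
`-∑ ξ ^ (i + q j)` over `0 < i, j < p`, and summing over `k` turns every monomial into a sum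
`∑ₖ w ^ (2k + 1)` with `w ^ (2p) = 1`, which is `± p` if `w = ±1` and `0` otherwise, so the
whole sum is an integer multiple of `p`.
-/

section ZMultiples

variable {R : Type*} [CommRing R] [IsDomain R]

theorem sum_range_pow_two_mul_add_one_mem_zmultiples {w : R} {p : ℕ} (hw : w ^ (2 * p) = 1) :
    ∑ k ∈ range p, w ^ (2 * k + 1) ∈ AddSubgroup.zmultiples (p : R) := by
  have hsplit : ∑ k ∈ range p, w ^ (2 * k + 1) = w * ∑ k ∈ range p, (w ^ 2) ^ k := by
    rw [mul_sum]
    exact sum_congr rfl fun k _ => by ring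
  by_cases hw2 : w ^ 2 = 1
  · rcases sq_eq_one_iff.mp hw2 with rfl | rfl
    · exact ⟨1, by simp⟩
    · exact ⟨-1, by simp [pow_succ, pow_mul]⟩
  · have hgeom : ∑ k ∈ range p, (w ^ 2) ^ k = 0 := by
      have := geom_sum_mul (w ^ 2) p
      rw [← pow_mul, hw, sub_self] at this
      exact (mul_eq_zero.mp this).resolve_right (sub_ne_zero.mpr hw2)
    rw [hsplit, hgeom, mul_zero]
    exact zero_mem _

theorem sum_range_sum_mul_sum_mem_zmultiples {ζ : R} {p : ℕ} (hζ : ζ ^ (2 * p) = 1)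
    (s t : Finset ℕ) (q : ℕ) :
    ∑ k ∈ range p, (∑ i ∈ s, (ζ ^ (2 * k + 1)) ^ i) * (∑ j ∈ t, ((ζ ^ (2 * k + 1)) ^ q) ^ j)
      ∈ AddSubgroup.zmultiples (p : R) := by
  have hexpand : ∀ k, (∑ i ∈ s, (ζ ^ (2 * k + 1)) ^ i) * (∑ j ∈ t, ((ζ ^ (2 * k + 1)) ^ q) ^ j)
      = ∑ i ∈ s, ∑ j ∈ t, (ζ ^ (i + q * j)) ^ (2 * k + 1) := fun k => by
    rw [sum_mul_sum]
    exact sum_congr rfl fun i _ => sum_congr rfl fun j _ => by ring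
  simp only [hexpand]
  rw [sum_comm]
  refine AddSubgroup.sum_mem _ fun i _ => ?_
  rw [sum_comm]
  refine AddSubgroup.sum_mem _ fun j _ => sum_range_pow_two_mul_add_one_mem_zmultiples ?_
  rw [← pow_mul, mul_comm, pow_mul, hζ, one_pow]

end ZMultiples

namespace Complex

theorem cot_eq_neg_I_mul_sum_Ico {z : ℂ} {p : ℕ} (h : exp (2 * I * z) ^ p = -1) :
    cot z = -I * ∑ j ∈ Ico 1 p, exp (2 * I * z) ^ j := by
  rw [cot_eq_exp_ratio]
  set E := exp (2 * I * z)
  have hp : 1 ≤ p := Nat.one_le_iff_ne_zero.mpr fun hp => by norm_num [hp] at h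
  have hE : 1 - E ≠ 0 := fun hE => by
    rw [← sub_eq_zero.mp hE, one_pow] at h; norm_num at h
  have hgeom := geom_sum_Ico_mul E hp
  rw [h, pow_one] at hgeom
  rw [div_eq_iff (mul_ne_zero I_ne_zero hE)]
  linear_combination hgeom + (1 - E) * (∑ j ∈ Ico 1 p, E ^ j) * I_sq

theorem exp_pi_mul_I_div_pow_self {p : ℕ} (hp : p ≠ 0) : exp (π * I / p) ^ p = -1 := by
  rw [← exp_nat_mul, mul_div_cancel₀ _ (Nat.cast_ne_zero.mpr hp), exp_pi_mul_I]

theorem exp_two_mul_I_mul_odd_angle {p : ℕ} (hp : p ≠ 0) (n k : ℕ) :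
    exp (2 * I * (π * n * (2 * k + 1) / (2 * p))) = (exp (π * I / p) ^ (2 * k + 1)) ^ n := by
  rw [← pow_mul, ← exp_nat_mul]
  have : (p : ℂ) ≠ 0 := Nat.cast_ne_zero.mpr hp
  congr 1
  push_cast
  field_simp

theorem cot_mul_cot_odd_angle {p q : ℕ} (hp : p ≠ 0) (hq : Odd q) (k : ℕ) :
    cot (π * (2 * k + 1) / (2 * p)) * cot (π * q * (2 * k + 1) / (2 * p))
      = -((∑ i ∈ Ico 1 p, (exp (π * I / p) ^ (2 * k + 1)) ^ i)
          * (∑ j ∈ Ico 1 p, ((exp (π * I / p) ^ (2 * k + 1)) ^ q) ^ j)) := by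
  have hξ : (exp (π * I / p) ^ (2 * k + 1)) ^ p = -1 := by
    rw [pow_right_comm, exp_pi_mul_I_div_pow_self hp, (odd_two_mul_add_one k).neg_one_pow]
  have hξq : ((exp (π * I / p) ^ (2 * k + 1)) ^ q) ^ p = -1 := by
    rw [pow_right_comm, hξ, hq.neg_one_pow]
  have hexp := exp_two_mul_I_mul_odd_angle hp 1 k
  rw [Nat.cast_one, mul_one, pow_one] at hexp
  have hexp_q := exp_two_mul_I_mul_odd_angle hp q k
  rw [cot_eq_neg_I_mul_sum_Ico (hexp ▸ hξ), cot_eq_neg_I_mul_sum_Ico (hexp_q ▸ hξq), hexp, hexp_q]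
  linear_combination (∑ i ∈ Ico 1 p, (exp (π * I / p) ^ (2 * k + 1)) ^ i)
    * (∑ j ∈ Ico 1 p, ((exp (π * I / p) ^ (2 * k + 1)) ^ q) ^ j) * I_sq

end Complex

theorem cot_sum_integer_general (p q : ℕ) (hp : 0 < p) (hodd : Odd q) :
    ∃ m : ℤ, (1 / (p : ℝ)) * ∑ k ∈ Finset.range p,
        Real.cot (Real.pi * (2 * (k : ℝ) + 1) / (2 * p))
          * Real.cot (Real.pi * q * (2 * (k : ℝ) + 1) / (2 * p)) = m := by
  have hζ : Complex.exp (π * Complex.I / p) ^ (2 * p) = 1 := by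
    rw [pow_mul', Complex.exp_pi_mul_I_div_pow_self hp.ne', neg_one_sq]
  obtain ⟨m, hm⟩ := AddSubgroup.mem_zmultiples_iff.mp <|
    sum_range_sum_mul_sum_mem_zmultiples hζ (Ico 1 p) (Ico 1 p) q
  refine ⟨-m, Complex.ofReal_injective ?_⟩
  push_cast
  rw [sum_congr rfl fun k _ => Complex.cot_mul_cot_odd_angle hp.ne' hodd k, sum_neg_distrib, ← hm]
  have hpc : (p : ℂ) ≠ 0 := Nat.cast_ne_zero.mpr hp.ne'
  rw [zsmul_eq_mul]
  field_simp

theorem cot_sum_integer (p q : ℕ) (hp : 0 < p) (hq : 0 < q)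
    (hcop : Nat.Coprime p q) (hodd : Odd q) :
    ∃ m : ℤ, (1 / (p : ℝ)) * ∑ k ∈ Finset.range p,
        Real.cot (Real.pi * (2 * (k : ℝ) + 1) / (2 * p))
          * Real.cot (Real.pi * q * (2 * (k : ℝ) + 1) / (2 * p)) = m :=
  cot_sum_integer_general p q hp hodd
end
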